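/- Let σ₀ and σ₁ be positive definite density matrices. Define φ(r) = −log Tr(σ₁ σ₀^{r/2} σ₁^{-r} σ₀^{r/2}) for r ∈ [0,1]. Then φ(0) = 0 and φ'(0) = D(σ₁‖σ₀). -/

import Mathlib

/-
Proof idea: for positive definite `σ`, `σ ^ p = exp (p log σ)`, so `r ↦ σ ^ (c r)` has derivative
`c log σ` at `0` and value `1` there. By the product rule the derivative at `0` of
`σ₁ σ₀^{r/2} σ₁^{-r} σ₀^{r/2}` is `σ₁ (log σ₀ - log σ₁)`, whose trace is `-D(σ₁‖σ₀)`, while its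
trace at `0` is `Tr σ₁ = 1`; differentiating `-log` at `1` gives the claim.
-/

open Matrix
open scoped ComplexOrder

variable {d : Type*} [Fintype d] [DecidableEq d]

open Classical in
/-- Functional calculus for Hermitian matrices: apply `f` to the eigenvalues.
Returns `0` if the matrix is not Hermitian. -/
noncomputable def mfun (f : ℝ → ℝ) (A : Matrix d d ℂ) : Matrix d d ℂ :=
  if hA : A.IsHermitian then
    (hA.eigenvectorUnitary : Matrix d d ℂ) *
      Matrix.diagonal (fun i => (f (hA.eigenvalues i) : ℂ)) *
      star (hA.eigenvectorUnitary : Matrix d d ℂ)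
  else 0

/-- Matrix logarithm on the support (eigenvalues `≤ 0` are mapped to `0`). -/
noncomputable def logm (A : Matrix d d ℂ) : Matrix d d ℂ :=
  mfun (fun x => if x ≤ 0 then 0 else Real.log x) A

/-- Matrix real power on the support (eigenvalues `≤ 0` are mapped to `0`). -/
noncomputable def powm (A : Matrix d d ℂ) (p : ℝ) : Matrix d d ℂ :=
  mfun (fun x => if x ≤ 0 then 0 else x ^ p) A

/-- Quantum relative entropy `D(ρ‖σ) = Tr(ρ (log ρ − log σ))` (natural log). -/
noncomputable def qRelEnt (ρ σ : Matrix d d ℂ) : ℝ :=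
  ((ρ * (logm ρ - logm σ)).trace).re

/-- The support of `ρ` is contained in the support of `σ` (kernel containment,
equivalent to range containment for Hermitian matrices). -/
def SuppSubset (ρ σ : Matrix d d ℂ) : Prop :=
  ∀ v : d → ℂ, σ.mulVec v = 0 → ρ.mulVec v = 0

/-- Trace norm of a Hermitian matrix: `Tr |A|`. -/
noncomputable def traceNorm (A : Matrix d d ℂ) : ℝ :=
  ((mfun (fun x => |x|) A).trace).re

-- Any norm would do; the operator norm makes matrices a normed algebra, as `exp` and the product
-- rule require.
open scoped Matrix.Norms.Operator

section FunctionalCalculus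

variable {A : Matrix d d ℂ}

open Classical in
lemma mfun_of_isHermitian (f : ℝ → ℝ) (hA : A.IsHermitian) :
    mfun f A = (hA.eigenvectorUnitary : Matrix d d ℂ) *
      diagonal (fun i => (f (hA.eigenvalues i) : ℂ)) *
      star (hA.eigenvectorUnitary : Matrix d d ℂ) :=
  dif_pos hA

lemma mfun_congr {f g : ℝ → ℝ} (hA : A.IsHermitian)
    (h : ∀ i, f (hA.eigenvalues i) = g (hA.eigenvalues i)) : mfun f A = mfun g A := by
  simp only [mfun_of_isHermitian _ hA, h]

lemma smul_mfun (c : ℝ) (f : ℝ → ℝ) : c • mfun f A = mfun (fun x => c * f x) A := by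
  unfold mfun
  split_ifs
  · rw [← smul_mul_assoc, ← mul_smul_comm, ← diagonal_smul]
    congr 3 with i
    simp [Complex.real_smul]
  · exact smul_zero c

lemma exp_mfun (f : ℝ → ℝ) (hA : A.IsHermitian) :
    NormedSpace.exp (mfun f A) = mfun (fun x => Real.exp (f x)) A := by
  set U : Matrix d d ℂ := ↑hA.eigenvectorUnitary
  have hU : star U = U⁻¹ := (inv_eq_left_inv (Unitary.coe_star_mul_self _)).symm
  rw [mfun_of_isHermitian _ hA, mfun_of_isHermitian _ hA, hU, exp_conj _ _ ?_, exp_diagonal]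
  · congr 3
    funext i
    rw [Pi.coe_exp, ← Complex.exp_eq_exp_ℂ, Complex.ofReal_exp]
  · exact (isUnit_iff_isUnit_det _).2
      (isUnit_det_of_left_inverse (hU ▸ Unitary.coe_star_mul_self _))

lemma powm_eq_exp_smul_logm (hA : A.PosDef) (p : ℝ) : powm A p = NormedSpace.exp (p • logm A) := by
  rw [logm, smul_mfun, exp_mfun _ hA.1, powm]
  refine mfun_congr hA.1 fun i => ?_
  have hi := hA.eigenvalues_pos i
  simp only [hi.not_ge, if_false, Real.rpow_def_of_pos hi, mul_comm]

lemma powm_zero (hA : A.PosDef) : powm A 0 = 1 := by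
  rw [powm_eq_exp_smul_logm hA, zero_smul, NormedSpace.exp_zero]

lemma hasDerivAt_powm (hA : A.PosDef) (p : ℝ) : HasDerivAt (powm A) (powm A p * logm A) p := by
  rw [funext (powm_eq_exp_smul_logm hA)]
  exact hasDerivAt_exp_smul_const (logm A) p

end FunctionalCalculus

lemma HasDerivAt.re_trace {n : Type*} [Fintype n] {M : ℝ → Matrix n n ℂ} {M' : Matrix n n ℂ}
    {t : ℝ} (h : HasDerivAt M M' t) : HasDerivAt (fun r => (M r).trace.re) M'.trace.re t :=
  (Complex.reCLM.comp (traceLinearMap n ℝ ℂ).toContinuousLinearMap).hasFDerivAt.comp_hasDerivAt t h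

lemma hasDerivAt_mul_powm_sandwich (C : Matrix d d ℂ) {A B : Matrix d d ℂ} (hA : A.PosDef)
    (hB : B.PosDef) :
    HasDerivAt (fun r : ℝ => C * powm A (r / 2) * powm B (-r) * powm A (r / 2))
      (C * (logm A - logm B)) 0 := by
  have hP : HasDerivAt (fun r : ℝ => powm A (r / 2)) ((1 / 2 : ℝ) • logm A) 0 := by
    have h := (hasDerivAt_powm hA (0 / 2)).scomp 0 ((hasDerivAt_id (0 : ℝ)).div_const 2)
    simp only [zero_div, powm_zero hA, one_mul] at h
    exact h
  have hQ : HasDerivAt (fun r : ℝ => powm B (-r)) (-logm B) 0 := by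
    have h := (hasDerivAt_powm hB (-0)).scomp 0 (hasDerivAt_neg (0 : ℝ))
    simp only [neg_zero, powm_zero hB, one_mul, neg_one_smul] at h
    exact h
  refine ((((hasDerivAt_const (0 : ℝ) C).fun_mul hP).fun_mul hQ).fun_mul hP).congr_deriv ?_
  simp only [powm_zero hA, powm_zero hB, neg_zero, zero_div, mul_one, zero_add,
    mul_smul_comm, mul_neg, mul_sub]
  module

theorem deriv_phi_at_zero_general (σ₀ σ₁ : Matrix d d ℂ)
    (h₀ : σ₀.PosDef)
    (h₁ : σ₁.PosDef) (h₁1 : σ₁.trace = 1) :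
    (fun r : ℝ =>
        -Real.log (((σ₁ * powm σ₀ (r / 2) * powm σ₁ (-r) * powm σ₀ (r / 2)).trace).re)) 0
      = 0 ∧
    HasDerivAt
      (fun r : ℝ =>
        -Real.log (((σ₁ * powm σ₀ (r / 2) * powm σ₁ (-r) * powm σ₀ (r / 2)).trace).re))
      (qRelEnt σ₁ σ₀) 0 := by
  have h_at_zero : ((σ₁ * powm σ₀ (0 / 2) * powm σ₁ (-0) * powm σ₀ (0 / 2)).trace).re = 1 := by
    simp [powm_zero h₀, powm_zero h₁, h₁1]
  refine ⟨by dsimp only; rw [h_at_zero, Real.log_one, neg_zero], ?_⟩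
  have h := ((hasDerivAt_mul_powm_sandwich σ₁ h₀ h₁).re_trace.log
    (h_at_zero ▸ one_ne_zero)).neg
  refine h.congr_deriv ?_
  rw [h_at_zero, div_one, qRelEnt, mul_sub, mul_sub, trace_sub, trace_sub, Complex.sub_re,
    Complex.sub_re, neg_sub]

/-- For positive definite density matrices `σ₀`, `σ₁`, the function
`φ(r) = −log Tr(σ₁ σ₀^{r/2} σ₁^{-r} σ₀^{r/2})` satisfies `φ(0) = 0` and
`φ'(0) = D(σ₁‖σ₀)`. -/
theorem deriv_phi_at_zero (σ₀ σ₁ : Matrix d d ℂ)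
    (h₀ : σ₀.PosDef) (h₀1 : σ₀.trace = 1)
    (h₁ : σ₁.PosDef) (h₁1 : σ₁.trace = 1) :
    (fun r : ℝ =>
        -Real.log (((σ₁ * powm σ₀ (r / 2) * powm σ₁ (-r) * powm σ₀ (r / 2)).trace).re)) 0
      = 0 ∧
    HasDerivAt
      (fun r : ℝ =>
        -Real.log (((σ₁ * powm σ₀ (r / 2) * powm σ₁ (-r) * powm σ₀ (r / 2)).trace).re))
      (qRelEnt σ₁ σ₀) 0 :=
  deriv_phi_at_zero_general σ₀ σ₁ h₀ h₁ h₁1
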